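/- arXiv:0906.2217 — 8 statements merged into one kernel-verified Lean document; each statement's English description precedes it below -/
import Mathlib

section
/- Let α ∈ (0,1) and θ > −α, and let (U_k)_{k≥1} be a sequence of independent random variables on a probability space such that U_k has the Beta(1−α, θ+kα) distribution. Then with probability one, Σ_{n=1}^∞ U_n ∏_{k=1}^{n−1} (1−U_k) = 1. -/
open MeasureTheory ProbabilityTheory Filter Set

/-- The Beta distribution on `ℝ` with parameters `a, b`: the measure with density
`x^(a-1) * (1-x)^(b-1) / (Γ(a)Γ(b)/Γ(a+b))` on `(0,1)` with respect to Lebesgue measure. -/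
noncomputable def betaMeasure' (a b : ℝ) : Measure ℝ :=
  volume.withDensity fun x =>
    ENNReal.ofReal (Set.indicator (Set.Ioo (0:ℝ) 1)
      (fun x => x ^ (a - 1) * (1 - x) ^ (b - 1) /
        (Real.Gamma a * Real.Gamma b / Real.Gamma (a + b))) x)

/-!
The partial sums telescope: `∑_{n<N} U_n ∏_{k<n} (1 - U_k) = 1 - ∏_{k<N} (1 - U_k)`, so it
suffices that the remaining stick `∏_{k<N} (1 - U_k)` tends to zero almost surely. By
independence its mean is `∏_{k<N} E(1 - U_k) = ∏_{k<N} (1 - (1 - α) / (θ + 1 + kα))`, which tends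
to zero because `∑ 1 / (θ + 1 + kα)` diverges like the harmonic series. The remaining stick
decreases in `N`, so its limit has mean zero and therefore vanishes almost surely.
-/

open scoped ENNReal Topology

section Beta

variable {a b : ℝ}

lemma betaMeasure'_eq_betaMeasure (a b : ℝ) : betaMeasure' a b = betaMeasure a b := by
  refine congrArg volume.withDensity (funext fun x => ?_)
  by_cases hx : x ∈ Ioo (0 : ℝ) 1
  · rw [betaPDF_of_pos_lt_one hx.1 hx.2, indicator_of_mem hx, ← beta]
    ring_nf
  · rw [indicator_of_notMem hx, betaPDF_eq, if_neg (show ¬(0 < x ∧ x < 1) from hx)]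

lemma ae_mem_Ioo_betaMeasure (a b : ℝ) : ∀ᵐ x ∂betaMeasure a b, x ∈ Ioo 0 1 := by
  refine (ae_withDensity_iff (by unfold betaPDF; fun_prop)).2 (ae_of_all _ fun x hx => ?_)
  by_contra hx'
  exact hx (by rw [betaPDF_eq, if_neg (show ¬(0 < x ∧ x < 1) from hx'), ENNReal.ofReal_zero])

lemma beta_add_one_right (ha : 0 < a) (hb : 0 < b) :
    beta a (b + 1) = beta a b * (b / (a + b)) := by
  have hab : Real.Gamma (a + b) ≠ 0 := (Real.Gamma_pos_of_pos (add_pos ha hb)).ne'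
  rw [beta, beta, Real.Gamma_add_one hb.ne', ← add_assoc,
    Real.Gamma_add_one (add_pos ha hb).ne']
  field_simp

lemma betaPDF_mul_ofReal_one_sub (ha : 0 < a) (hb : 0 < b) (x : ℝ) :
    betaPDF a b x * ENNReal.ofReal (1 - x)
      = ENNReal.ofReal (b / (a + b)) * betaPDF a (b + 1) x := by
  by_cases hx : x ∈ Ioo (0 : ℝ) 1
  · have hx' : 0 < 1 - x := sub_pos.2 hx.2
    have hx0 : 0 < x := hx.1
    have hB := beta_pos ha hb
    have key : 1 / beta a b * x ^ (a - 1) * (1 - x) ^ (b - 1) * (1 - x)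
        = b / (a + b) * (1 / beta a (b + 1) * x ^ (a - 1) * (1 - x) ^ (b + 1 - 1)) := by
      rw [beta_add_one_right ha hb, add_sub_cancel_right, Real.rpow_sub_one hx'.ne' b]
      field_simp
    rw [betaPDF_of_pos_lt_one hx.1 hx.2, betaPDF_of_pos_lt_one hx.1 hx.2,
      ← ENNReal.ofReal_mul (by positivity), ← ENNReal.ofReal_mul (by positivity), key]
  · simp [betaPDF_eq, show ¬(0 < x ∧ x < 1) from hx]

lemma lintegral_ofReal_one_sub_betaMeasure (ha : 0 < a) (hb : 0 < b) :
    ∫⁻ x, ENNReal.ofReal (1 - x) ∂betaMeasure a b = ENNReal.ofReal (b / (a + b)) := by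
  rw [betaMeasure, lintegral_withDensity_eq_lintegral_mul _ (by unfold betaPDF; fun_prop)
    (by fun_prop)]
  simp only [Pi.mul_apply, betaPDF_mul_ofReal_one_sub ha hb]
  rw [lintegral_const_mul _ (by unfold betaPDF; fun_prop),
    lintegral_betaPDF_eq_one ha (by linarith), mul_one]

end Beta

lemma sum_range_mul_prod_one_sub {R : Type*} [CommRing R] (u : ℕ → R) (N : ℕ) :
    ∑ n ∈ Finset.range N, u n * ∏ k ∈ Finset.range n, (1 - u k)
      = 1 - ∏ k ∈ Finset.range N, (1 - u k) := by
  induction N with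
  | zero => simp
  | succ N ih => rw [Finset.sum_range_succ, ih, Finset.prod_range_succ]; ring

lemma hasSum_mul_prod_one_sub {u : ℕ → ℝ} (hu : ∀ n, u n ∈ Icc 0 1)
    (hlim : Tendsto (fun N => ∏ k ∈ Finset.range N, (1 - u k)) atTop (𝓝 0)) :
    HasSum (fun n => u n * ∏ k ∈ Finset.range n, (1 - u k)) 1 := by
  refine (hasSum_iff_tendsto_nat_of_nonneg (fun n => mul_nonneg (hu n).1 ?_) 1).2 ?_
  · exact Finset.prod_nonneg fun k _ => sub_nonneg.2 (hu k).2
  simp_rw [sum_range_mul_prod_one_sub]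
  simpa using (tendsto_const_nhds (x := (1 : ℝ))).sub hlim

lemma tendsto_prod_one_sub_of_tendsto_sum {d : ℕ → ℝ} (hd : ∀ k, d k ∈ Icc 0 1)
    (hsum : Tendsto (fun N => ∑ k ∈ Finset.range N, d k) atTop atTop) :
    Tendsto (fun N => ∏ k ∈ Finset.range N, (1 - d k)) atTop (𝓝 0) := by
  have hbound (N : ℕ) : ∏ k ∈ Finset.range N, (1 - d k)
      ≤ Real.exp (-∑ k ∈ Finset.range N, d k) := by
    rw [← Finset.sum_neg_distrib, Real.exp_sum]
    exact Finset.prod_le_prod (fun k _ => sub_nonneg.2 (hd k).2)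
      fun k _ => by linarith [Real.add_one_le_exp (-d k)]
  exact squeeze_zero (fun N => Finset.prod_nonneg fun k _ => sub_nonneg.2 (hd k).2) hbound
    (Real.tendsto_exp_atBot.comp (tendsto_neg_atTop_atBot.comp hsum))

lemma tendsto_sum_inv_add_mul_atTop {q p : ℝ} (hq : 0 < q) (hp : 0 < p) :
    Tendsto (fun N => ∑ k ∈ Finset.range N, (q + k * p)⁻¹) atTop atTop := by
  have harmonic := Real.tendsto_sum_range_one_div_nat_succ_atTop.const_mul_atTop
    (inv_pos.2 (add_pos hq hp))
  simp_rw [Finset.mul_sum] at harmonic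
  refine tendsto_atTop_mono (fun N => Finset.sum_le_sum fun k _ => ?_) harmonic
  have hk : (0 : ℝ) ≤ k := k.cast_nonneg
  rw [one_div, ← mul_inv]
  exact inv_anti₀ (by positivity) (by nlinarith)

lemma tendsto_prod_one_sub_div_add_mul {a q p : ℝ} (ha : 0 < a) (haq : a ≤ q) (hp : 0 < p) :
    Tendsto (fun N => ∏ k ∈ Finset.range N, (1 - a / (q + k * p))) atTop (𝓝 0) := by
  have hq : 0 < q := ha.trans_le haq
  have hpos (k : ℕ) : 0 < q + k * p := by positivity
  refine tendsto_prod_one_sub_of_tendsto_sum (fun k => ⟨by positivity, ?_⟩) ?_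
  · exact div_le_one_of_le₀ (by nlinarith [hpos k]) (hpos k).le
  simp_rw [div_eq_mul_inv, ← Finset.mul_sum]
  exact (tendsto_sum_inv_add_mul_atTop hq hp).const_mul_atTop ha

lemma ae_tendsto_zero_of_antitone_of_tendsto_lintegral {Ω : Type*} [MeasurableSpace Ω]
    {μ : Measure Ω} {f : ℕ → Ω → ℝ≥0∞} (hf : ∀ n, AEMeasurable (f n) μ)
    (hanti : ∀ᵐ ω ∂μ, Antitone fun n => f n ω)
    (hlim : Tendsto (fun n => ∫⁻ ω, f n ω ∂μ) atTop (𝓝 0)) :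
    ∀ᵐ ω ∂μ, Tendsto (fun n => f n ω) atTop (𝓝 0) := by
  have hinf : ∫⁻ ω, ⨅ n, f n ω ∂μ = 0 :=
    nonpos_iff_eq_zero.1 <| ge_of_tendsto' hlim fun n => lintegral_mono fun ω => iInf_le _ n
  filter_upwards [(lintegral_eq_zero_iff' (AEMeasurable.iInf hf)).1 hinf, hanti] with ω h0 hω
  have h0 : ⨅ n, f n ω = 0 := h0
  exact h0 ▸ tendsto_atTop_iInf hω

lemma ae_tendsto_prod_one_sub_of_iIndepFun {Ω : Type*} [MeasurableSpace Ω] {P : Measure Ω}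
    {U : ℕ → Ω → ℝ} (hmeas : ∀ k, Measurable (U k)) (hindep : iIndepFun U P)
    (hunit : ∀ᵐ ω ∂P, ∀ k, U k ω ∈ Icc 0 1)
    (hlim : Tendsto (fun N => ∏ k ∈ Finset.range N, ∫⁻ ω, ENNReal.ofReal (1 - U k ω) ∂P)
      atTop (𝓝 0)) :
    ∀ᵐ ω ∂P, Tendsto (fun N => ∏ k ∈ Finset.range N, (1 - U k ω)) atTop (𝓝 0) := by
  set V : ℕ → Ω → ℝ≥0∞ := fun k ω => ENNReal.ofReal (1 - U k ω)
  have hVmeas (k : ℕ) : Measurable (V k) := by fun_prop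
  have hVindep : iIndepFun V P :=
    hindep.comp (fun _ x => ENNReal.ofReal (1 - x)) fun _ => by fun_prop
  have hV : ∀ᵐ ω ∂P, Tendsto (fun N => ∏ k ∈ Finset.range N, V k ω) atTop (𝓝 0) := by
    refine ae_tendsto_zero_of_antitone_of_tendsto_lintegral
      (fun N => (Finset.measurable_prod _ fun k _ => hVmeas k).aemeasurable) ?_ ?_
    · filter_upwards [hunit] with ω hω
      exact antitone_nat_of_succ_le fun N => by
        rw [Finset.prod_range_succ]
        exact mul_le_of_le_one_right' (ENNReal.ofReal_le_one.2 (by linarith [(hω N).1]))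
    · simp_rw [lintegral_prod_eq_prod_lintegral_of_indepFun _ V hVindep hVmeas]
      exact hlim
  filter_upwards [hunit, hV] with ω hω hVω
  refine ((ENNReal.tendsto_toReal ENNReal.zero_ne_top).comp hVω).congr fun N => ?_
  have hnonneg (k : ℕ) : 0 ≤ 1 - U k ω := sub_nonneg.2 (hω k).2
  simp only [Function.comp_apply, V, ← ENNReal.ofReal_prod_of_nonneg fun k _ => hnonneg k]
  exact ENNReal.toReal_ofReal (Finset.prod_nonneg fun k _ => hnonneg k)

section StickBreaking

variable {α θ : ℝ}

lemma lintegral_ofReal_one_sub_gem (hα : α ∈ Ioo 0 1) (hθ : -α < θ) (k : ℕ) :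
    ∫⁻ x, ENNReal.ofReal (1 - x) ∂betaMeasure' (1 - α) (θ + (k + 1) * α)
      = ENNReal.ofReal (1 - (1 - α) / (θ + 1 + k * α)) := by
  have hb : 0 < θ + (k + 1) * α := by linarith [mul_nonneg k.cast_nonneg hα.1.le]
  rw [betaMeasure'_eq_betaMeasure, lintegral_ofReal_one_sub_betaMeasure (by linarith [hα.2]) hb,
    show 1 - α + (θ + (k + 1) * α) = θ + 1 + k * α by ring]
  have : θ + 1 + k * α ≠ 0 := by linarith [hα.2]
  congr 1
  field_simp
  ring

lemma tendsto_prod_lintegral_ofReal_one_sub_gem (hα : α ∈ Ioo 0 1) (hθ : -α < θ) :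
    Tendsto (fun N => ∏ k ∈ Finset.range N,
      ∫⁻ x, ENNReal.ofReal (1 - x) ∂betaMeasure' (1 - α) (θ + (k + 1) * α)) atTop (𝓝 0) := by
  have hden (k : ℕ) : 1 - α ≤ θ + 1 + k * α := by
    linarith [mul_nonneg k.cast_nonneg hα.1.le]
  simp_rw [lintegral_ofReal_one_sub_gem hα hθ, ← ENNReal.ofReal_prod_of_nonneg fun k _ =>
    sub_nonneg.2 (div_le_one_of_le₀ (hden k) (by linarith [hden k, hα.2]))]
  simpa using ENNReal.tendsto_ofReal
    (tendsto_prod_one_sub_div_add_mul (by linarith [hα.2]) (by linarith) hα.1)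

end StickBreaking

theorem gem_sum_eq_one_general {Ω : Type*} [MeasurableSpace Ω] (P : Measure Ω)
    (α θ : ℝ) (hα : α ∈ Set.Ioo (0:ℝ) 1) (hθ : -α < θ)
    (U : ℕ → Ω → ℝ) (hmeas : ∀ k, Measurable (U k))
    (hindep : iIndepFun U P)
    (hlaw : ∀ k : ℕ, P.map (U k) = betaMeasure' (1 - α) (θ + (k + 1) * α)) :
    ∀ᵐ ω ∂P, (∑' n : ℕ, U n ω * ∏ k ∈ Finset.range n, (1 - U k ω)) = 1 := by
  have hunit : ∀ᵐ ω ∂P, ∀ k, U k ω ∈ Icc 0 1 := by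
    refine ae_all_iff.2 fun k => ae_of_ae_map (hmeas k).aemeasurable ?_
    rw [hlaw k, betaMeasure'_eq_betaMeasure]
    exact (ae_mem_Ioo_betaMeasure _ _).mono fun x hx => Ioo_subset_Icc_self hx
  have hmean (k : ℕ) : ∫⁻ ω, ENNReal.ofReal (1 - U k ω) ∂P
      = ∫⁻ x, ENNReal.ofReal (1 - x) ∂betaMeasure' (1 - α) (θ + (k + 1) * α) := by
    rw [← hlaw k, lintegral_map (by fun_prop) (hmeas k)]
  have hlim : Tendsto (fun N => ∏ k ∈ Finset.range N, ∫⁻ ω, ENNReal.ofReal (1 - U k ω) ∂P)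
      atTop (𝓝 0) := by
    simpa only [hmean] using tendsto_prod_lintegral_ofReal_one_sub_gem hα hθ
  filter_upwards [hunit, ae_tendsto_prod_one_sub_of_iIndepFun hmeas hindep hunit hlim]
    with ω hω hprod
  exact (hasSum_mul_prod_one_sub hω hprod).tsum_eq

/-- For `α ∈ (0,1)`, `θ > -α` and `(U_k)_{k ≥ 1}` independent with `U_k ~ Beta(1-α, θ+kα)`,
with probability one `∑_{n≥1} U_n ∏_{k=1}^{n-1} (1 - U_k) = 1`.  (Here `U k` stands for
`U_{k+1}`, `k : ℕ`.) -/
theorem gem_sum_eq_one {Ω : Type*} [MeasurableSpace Ω] (P : Measure Ω) [IsProbabilityMeasure P]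
    (α θ : ℝ) (hα : α ∈ Set.Ioo (0:ℝ) 1) (hθ : -α < θ)
    (U : ℕ → Ω → ℝ) (hmeas : ∀ k, Measurable (U k))
    (hindep : iIndepFun U P)
    (hlaw : ∀ k : ℕ, P.map (U k) = betaMeasure' (1 - α) (θ + (k + 1) * α)) :
    ∀ᵐ ω ∂P, (∑' n : ℕ, U n ω * ∏ k ∈ Finset.range n, (1 - U k ω)) = 1 :=
  gem_sum_eq_one_general P α θ hα hθ U hmeas hindep hlaw
end

section
/- Fix an integer n ≥ 1. Then limsup of b(α,θ) · Σ_{i=1}^n log((θ+iα)/(θ+iα+1−α)) is at most −n, where the limsup is taken as a(α,θ) → 0 over pairs (α,θ) with α ∈ (0,1) and θ + α > 0. -/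
open MeasureTheory Filter Set

/-- `a(α,θ) = max(α, |θ|)`. -/
noncomputable def aParam (α θ : ℝ) : ℝ := max α |θ|

/-- `b(α,θ) = (-log a(α,θ))⁻¹`. -/
noncomputable def bParam (α θ : ℝ) : ℝ := (-Real.log (aParam α θ))⁻¹

/-- The filter describing `a(α,θ) → 0` over pairs `(α,θ)` with `α ∈ (0,1)` and `θ + α > 0`. -/
noncomputable def smallParamFilter : Filter (ℝ × ℝ) :=
  (Filter.comap (fun p : ℝ × ℝ => aParam p.1 p.2) (nhdsWithin 0 (Set.Ioi 0))) ⊓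
    Filter.principal {p : ℝ × ℝ | p.1 ∈ Set.Ioo (0:ℝ) 1 ∧ 0 < p.1 + p.2}

/-!
Each ratio is at most `(n+1)a / (1-a)`: its numerator `θ + iα` lies in `(0, (n+1)a]` and its
denominator is at least `1 - a`. Since `b · log a = -1`, the normalised sum is therefore at most
`n (-1 + b log((n+1)/(1-a)))`, which tends to `-n` because `b → 0` as `a → 0`.
-/

open Real Topology

section Pointwise

variable {α θ : ℝ}

lemma bParam_mul_log_aParam (ha₀ : 0 < aParam α θ) (ha₁ : aParam α θ < 1) :
    bParam α θ * log (aParam α θ) = -1 := by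
  have := (log_neg ha₀ ha₁).ne
  rw [bParam]
  field_simp

lemma log_ratio_le (n : ℕ) {i : ℕ} (hi : i < n) (hα : 0 < α) (hαθ : 0 < α + θ)
    (ha : aParam α θ < 1) :
    log ((θ + (i + 1) * α) / (θ + (i + 1) * α + 1 - α))
      ≤ log (aParam α θ) + log ((n + 1) / (1 - aParam α θ)) := by
  set a := aParam α θ
  have hαa : α ≤ a := le_max_left _ _
  have hθa : |θ| ≤ a := le_max_right _ _
  have hin : (i : ℝ) + 1 ≤ n := by exact_mod_cast hi
  have hiα : 0 ≤ (i : ℝ) * α := by positivity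
  have hnum_pos : 0 < θ + (i + 1) * α := by nlinarith
  have hnum_le : θ + (i + 1) * α ≤ (n + 1) * a := by
    nlinarith [le_of_abs_le hθa, mul_le_mul hin hαa hα.le (Nat.cast_nonneg n)]
  have hden_ge : 1 - a ≤ θ + (i + 1) * α + 1 - α := by linarith [neg_le_of_abs_le hθa]
  have ha₀ : 0 < a := hα.trans_le hαa
  have hden_pos : 0 < 1 - a := by linarith
  rw [← log_mul ha₀.ne' (by positivity), mul_div_assoc', mul_comm a]
  exact log_le_log (div_pos hnum_pos (by linarith)) <|
    div_le_div₀ (by positivity) hnum_le (by linarith) hden_ge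

lemma bParam_mul_sum_log_ratio_le (n : ℕ) (hα : 0 < α) (hαθ : 0 < α + θ)
    (ha : aParam α θ < 1) :
    bParam α θ * ∑ i ∈ Finset.range n, log ((θ + (i + 1) * α) / (θ + (i + 1) * α + 1 - α))
      ≤ n * (-1 + bParam α θ * log ((n + 1) / (1 - aParam α θ))) := by
  have ha₀ : 0 < aParam α θ := hα.trans_le (le_max_left _ _)
  have hb : 0 < bParam α θ := inv_pos.2 (neg_pos.2 (log_neg ha₀ ha))
  calc bParam α θ * ∑ i ∈ Finset.range n, log ((θ + (i + 1) * α) / (θ + (i + 1) * α + 1 - α))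
      ≤ bParam α θ * ∑ _i ∈ Finset.range n,
          (log (aParam α θ) + log ((n + 1) / (1 - aParam α θ))) := by
        gcongr with i hi
        exact log_ratio_le n (Finset.mem_range.1 hi) hα hαθ ha
    _ = n * (-1 + bParam α θ * log ((n + 1) / (1 - aParam α θ))) := by
        rw [Finset.sum_const, Finset.card_range, nsmul_eq_mul, mul_left_comm, mul_add,
          bParam_mul_log_aParam ha₀ ha]

end Pointwise

lemma tendsto_aParam_smallParamFilter :
    Tendsto (fun p : ℝ × ℝ => aParam p.1 p.2) smallParamFilter (𝓝[>] 0) :=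
  tendsto_comap.mono_left inf_le_left

lemma eventually_mem_smallParamFilter :
    ∀ᶠ p : ℝ × ℝ in smallParamFilter, p.1 ∈ Ioo (0 : ℝ) 1 ∧ 0 < p.1 + p.2 :=
  mem_inf_of_right (mem_principal_self _)

lemma tendsto_bParam_smallParamFilter :
    Tendsto (fun p : ℝ × ℝ => bParam p.1 p.2) smallParamFilter (𝓝 0) :=
  (tendsto_neg_atBot_atTop.comp tendsto_log_nhdsGT_zero).inv_tendsto_atTop.comp
    tendsto_aParam_smallParamFilter

lemma tendsto_bound_smallParamFilter (n : ℕ) :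
    Tendsto (fun p : ℝ × ℝ => n * (-1 + bParam p.1 p.2 * log ((n + 1) / (1 - aParam p.1 p.2))))
      smallParamFilter (𝓝 (-n)) := by
  have hlog : Tendsto (fun p : ℝ × ℝ => log ((n + 1) / (1 - aParam p.1 p.2)))
      smallParamFilter (𝓝 (log ((n + 1) / (1 - 0)))) :=
    (tendsto_const_nhds.div (tendsto_const_nhds.sub
      (tendsto_aParam_smallParamFilter.mono_right nhdsWithin_le_nhds)) (by norm_num)).log
      (by positivity)
  simpa using ((tendsto_bParam_smallParamFilter.mul hlog).const_add (-1)).const_mul (n : ℝ)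

theorem limsup_log_prod_ratio_le_general (n : ℕ) :
    Filter.limsup
      (fun p : ℝ × ℝ =>
        ((bParam p.1 p.2 *
          ∑ i ∈ Finset.range n,
            Real.log ((p.2 + (i + 1) * p.1) / (p.2 + (i + 1) * p.1 + 1 - p.1)) : ℝ) : EReal))
      smallParamFilter ≤ (-(n : ℝ) : EReal) := by
  rcases eq_or_neBot smallParamFilter with h | _
  · simp [h]
  have hbound : ∀ᶠ p : ℝ × ℝ in smallParamFilter,
      bParam p.1 p.2 * ∑ i ∈ Finset.range n,
          log ((p.2 + (i + 1) * p.1) / (p.2 + (i + 1) * p.1 + 1 - p.1))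
        ≤ n * (-1 + bParam p.1 p.2 * log ((n + 1) / (1 - aParam p.1 p.2))) := by
    filter_upwards [eventually_mem_smallParamFilter,
      tendsto_aParam_smallParamFilter.eventually_mem (Ioo_mem_nhdsGT one_pos)]
      with p ⟨⟨hα, _⟩, hαθ⟩ ⟨_, ha⟩
    exact bParam_mul_sum_log_ratio_le n hα hαθ ha
  calc _ ≤ limsup (fun p : ℝ × ℝ => ((n * (-1 + bParam p.1 p.2 *
          log ((n + 1) / (1 - aParam p.1 p.2))) : ℝ) : EReal)) smallParamFilter :=
        limsup_le_limsup (hbound.mono fun _ h => EReal.coe_le_coe h)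
    _ = ((-n : ℝ) : EReal) := ((continuous_coe_real_ereal.tendsto _).comp
        (tendsto_bound_smallParamFilter n)).limsup_eq
    _ = _ := EReal.coe_neg _

/-- For fixed `n ≥ 1`,
`limsup b(α,θ) ∑_{i=1}^n log((θ+iα)/(θ+iα+1-α)) ≤ -n` as `a(α,θ) → 0` over pairs `(α,θ)`
with `α ∈ (0,1)` and `θ + α > 0`. -/
theorem limsup_log_prod_ratio_le (n : ℕ) (hn : 1 ≤ n) :
    Filter.limsup
      (fun p : ℝ × ℝ =>
        ((bParam p.1 p.2 *
          ∑ i ∈ Finset.range n,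
            Real.log ((p.2 + (i + 1) * p.1) / (p.2 + (i + 1) * p.1 + 1 - p.1)) : ℝ) : EReal))
      smallParamFilter ≤ (-(n : ℝ) : EReal) :=
  limsup_log_prod_ratio_le_general n
end

section
/- Fix δ ∈ (0,1). Then the Beta(1−α, θ+α) measure of the interval (1−δ, 1] converges to 1 as a(α,θ) → 0 over pairs (α,θ) with α ∈ (0,1) and θ + α > 0. In particular, the distribution Beta(1−α, θ+α) converges weakly to the point mass at 1. -/
open MeasureTheory Filter Set

/-- The Beta distribution on `ℝ` with parameters `a, b`: the measure with density
`x^(a-1) * (1-x)^(b-1) / (Γ(a)Γ(b)/Γ(a+b))` on `(0,1)` with respect to Lebesgue measure. -/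
noncomputable def betaMeasure (a b : ℝ) : Measure ℝ :=
  volume.withDensity fun x =>
    ENNReal.ofReal (Set.indicator (Set.Ioo (0:ℝ) 1)
      (fun x => x ^ (a - 1) * (1 - x) ^ (b - 1) /
        (Real.Gamma a * Real.Gamma b / Real.Gamma (a + b))) x)

/-! With `a = 1 - α → 1` and `b = θ + α → 0⁺`, on `(0, 1 - δ]` the Beta density is at most
`δ ^ (b - 1) x ^ (a - 1) / B(a, b)`, whose integral is `δ ^ (b - 1) / (a B(a, b))`. This tends to
`0` because `B(a, b) = Γ(a) Γ(b) / Γ(a + b) → ∞`, the pole of `Γ` at `0` making `Γ(b) → ∞`.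
So the mass of `(1 - δ, 1]`, which is one minus the mass of `(-∞, 1 - δ]`, tends to `1`. -/

open scoped Topology
open ProbabilityTheory (beta betaPDF betaPDF_eq isProbabilityMeasureBeta betaPDF_eq_zero_of_one_le
  betaPDF_eq_zero_of_nonpos betaPDF_of_pos_lt_one)

theorem betaMeasure_eq_probabilityTheory_betaMeasure (a b : ℝ) :
    betaMeasure a b = ProbabilityTheory.betaMeasure a b := by
  refine congrArg volume.withDensity (funext fun x => ?_)
  simp only [betaPDF_eq, indicator_apply, mem_Ioo, beta]
  split_ifs
  · ring_nf
  · rfl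

theorem isProbabilityMeasure_betaMeasure {a b : ℝ} (ha : 0 < a) (hb : 0 < b) :
    IsProbabilityMeasure (betaMeasure a b) :=
  betaMeasure_eq_probabilityTheory_betaMeasure a b ▸ isProbabilityMeasureBeta ha hb

theorem betaMeasure_Ioi_one (a b : ℝ) : betaMeasure a b (Ioi 1) = 0 := by
  rw [betaMeasure_eq_probabilityTheory_betaMeasure, ProbabilityTheory.betaMeasure,
    withDensity_apply _ measurableSet_Ioi]
  exact setLIntegral_eq_zero measurableSet_Ioi fun x hx =>
    betaPDF_eq_zero_of_one_le (le_of_lt hx)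

theorem betaMeasure_Ioc_one {a b : ℝ} (ha : 0 < a) (hb : 0 < b) {c : ℝ} (hc : c ≤ 1) :
    betaMeasure a b (Ioc c 1) = 1 - betaMeasure a b (Iic c) := by
  have := isProbabilityMeasure_betaMeasure ha hb
  have hIic : betaMeasure a b (Iic 1) = 1 := by
    rw [← compl_Ioi, prob_compl_eq_one_sub measurableSet_Ioi, betaMeasure_Ioi_one, tsub_zero]
  refine ENNReal.eq_sub_of_add_eq (measure_ne_top _ _) ?_
  rw [add_comm, ← measure_union (Iic_disjoint_Ioc le_rfl) measurableSet_Ioc,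
    Iic_union_Ioc_eq_Iic hc, hIic]

theorem integral_Ioc_zero_one_rpow_sub_one {a : ℝ} (ha : 0 < a) :
    ∫ x in Ioc (0:ℝ) 1, x ^ (a - 1) = 1 / a := by
  rw [← intervalIntegral.integral_of_le zero_le_one, integral_rpow (Or.inl (by linarith)),
    sub_add_cancel, Real.one_rpow, Real.zero_rpow ha.ne', sub_zero]

theorem betaPDF_le_of_le_one_sub {a b δ x : ℝ} (ha : 0 < a) (hb₀ : 0 < b) (hb : b ≤ 1)
    (hδ : 0 < δ) (hx : x ≤ 1 - δ) :
    betaPDF a b x ≤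
      (Ioc 0 1).indicator (fun x => ENNReal.ofReal (δ ^ (b - 1) / beta a b * x ^ (a - 1))) x := by
  rcases le_or_gt x 0 with hx0 | hx0
  · rw [betaPDF_eq_zero_of_nonpos hx0]
    exact zero_le
  rw [betaPDF_of_pos_lt_one hx0 (by linarith),
    indicator_of_mem (show x ∈ Ioc 0 1 from ⟨hx0, by linarith⟩)]
  refine ENNReal.ofReal_le_ofReal ?_
  have hβ := ProbabilityTheory.beta_pos ha hb₀
  calc 1 / beta a b * x ^ (a - 1) * (1 - x) ^ (b - 1)
      ≤ 1 / beta a b * x ^ (a - 1) * δ ^ (b - 1) :=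
        mul_le_mul_of_nonneg_left (Real.rpow_le_rpow_of_nonpos hδ (by linarith) (by linarith))
          (by positivity)
    _ = δ ^ (b - 1) / beta a b * x ^ (a - 1) := by ring

theorem betaMeasure_Iic_le {a b δ : ℝ} (ha : 0 < a) (hb₀ : 0 < b) (hb : b ≤ 1) (hδ : 0 < δ) :
    betaMeasure a b (Iic (1 - δ)) ≤ ENNReal.ofReal (δ ^ (b - 1) / (a * beta a b)) := by
  set g : ℝ → ℝ := fun x => δ ^ (b - 1) / beta a b * x ^ (a - 1)
  have hg : IntegrableOn g (Ioc 0 1) :=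
    ((intervalIntegral.intervalIntegrable_rpow' (by linarith)).1).const_mul _
  rw [betaMeasure_eq_probabilityTheory_betaMeasure, ProbabilityTheory.betaMeasure,
    withDensity_apply _ measurableSet_Iic]
  calc ∫⁻ x in Iic (1 - δ), betaPDF a b x
      ≤ ∫⁻ x in Iic (1 - δ), (Ioc 0 1).indicator (fun x => ENNReal.ofReal (g x)) x :=
        setLIntegral_mono' measurableSet_Iic fun x hx => betaPDF_le_of_le_one_sub ha hb₀ hb hδ hx
    _ ≤ ∫⁻ x, (Ioc 0 1).indicator (fun x => ENNReal.ofReal (g x)) x :=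
        setLIntegral_le_lintegral _ _
    _ = ENNReal.ofReal (∫ x in Ioc 0 1, g x) := by
        rw [lintegral_indicator measurableSet_Ioc, ofReal_integral_eq_lintegral_ofReal hg]
        have hβ := ProbabilityTheory.beta_pos ha hb₀
        exact ae_restrict_of_forall_mem measurableSet_Ioc fun x hx =>
          mul_nonneg (by positivity) (Real.rpow_nonneg hx.1.le _)
    _ = ENNReal.ofReal (δ ^ (b - 1) / (a * beta a b)) := by
        rw [integral_const_mul, integral_Ioc_zero_one_rpow_sub_one ha]
        congr 1
        field_simp

theorem Real.tendsto_Gamma_nhdsGT_zero_atTop : Tendsto Real.Gamma (𝓝[>] 0) atTop := by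
  have hshift : Tendsto (fun x : ℝ => x + 1) (𝓝[>] 0) (𝓝 1) := by
    simpa only [zero_add] using
      ((continuous_add_const (1:ℝ)).tendsto 0).mono_left nhdsWithin_le_nhds
  have hcont : Tendsto (fun x : ℝ => Real.Gamma (x + 1)) (𝓝[>] 0) (𝓝 1) := by
    simpa only [Real.Gamma_one, Function.comp_def] using
      (Real.differentiableOn_Gamma_Ioi.continuousOn.continuousAt
        (Ioi_mem_nhds one_pos)).tendsto.comp hshift
  refine (hcont.pos_mul_atTop one_pos tendsto_inv_nhdsGT_zero).congr' ?_
  filter_upwards [self_mem_nhdsWithin] with x (hx : 0 < x)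
  rw [Real.Gamma_add_one hx.ne']
  field_simp

theorem tendsto_beta_atTop {a₀ : ℝ} (ha₀ : 0 < a₀) :
    Tendsto (fun p : ℝ × ℝ => beta p.1 p.2) (𝓝 a₀ ×ˢ 𝓝[>] 0) atTop := by
  have hcont : ContinuousAt Real.Gamma a₀ :=
    Real.differentiableOn_Gamma_Ioi.continuousOn.continuousAt (Ioi_mem_nhds ha₀)
  have hfst : Tendsto (fun p : ℝ × ℝ => p.1) (𝓝 a₀ ×ˢ 𝓝[>] 0) (𝓝 a₀) := tendsto_fst
  have hsnd : Tendsto (fun p : ℝ × ℝ => p.2) (𝓝 a₀ ×ˢ 𝓝[>] 0) (𝓝[>] 0) := tendsto_snd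
  have hsum : Tendsto (fun p : ℝ × ℝ => p.1 + p.2) (𝓝 a₀ ×ˢ 𝓝[>] 0) (𝓝 a₀) := by
    simpa only [add_zero] using hfst.add (hsnd.mono_right nhdsWithin_le_nhds)
  have hΓ := Real.Gamma_pos_of_pos ha₀
  refine (((hcont.tendsto.comp hfst).pos_mul_atTop hΓ
    (Real.tendsto_Gamma_nhdsGT_zero_atTop.comp hsnd)).atTop_mul_pos (inv_pos.2 hΓ)
      ((hcont.tendsto.comp hsum).inv₀ hΓ.ne')).congr fun p => ?_
  exact (div_eq_mul_inv _ _).symm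

theorem tendsto_betaMeasure_Ioc_one {a₀ δ : ℝ} (ha₀ : 0 < a₀) (hδ : 0 < δ) :
    Tendsto (fun p : ℝ × ℝ => betaMeasure p.1 p.2 (Ioc (1 - δ) 1)) (𝓝 a₀ ×ˢ 𝓝[>] 0) (𝓝 1) := by
  set l := 𝓝 a₀ ×ˢ 𝓝[>] (0:ℝ)
  have hfst : Tendsto (fun p : ℝ × ℝ => p.1) l (𝓝 a₀) := tendsto_fst
  have hsnd : Tendsto (fun p : ℝ × ℝ => p.2) l (𝓝[>] 0) := tendsto_snd
  have hsnd₀ : Tendsto (fun p : ℝ × ℝ => p.2) l (𝓝 0) := hsnd.mono_right nhdsWithin_le_nhds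
  have hparams : ∀ᶠ p : ℝ × ℝ in l, 0 < p.1 ∧ 0 < p.2 ∧ p.2 ≤ 1 :=
    (hfst.eventually (lt_mem_nhds ha₀)).and
      ((hsnd.eventually self_mem_nhdsWithin).and (hsnd₀.eventually (ge_mem_nhds one_pos)))
  have hbound : Tendsto (fun p : ℝ × ℝ => δ ^ (p.2 - 1) / (p.1 * beta p.1 p.2)) l (𝓝 0) := by
    have hnum : Tendsto (fun p : ℝ × ℝ => δ ^ (p.2 - 1)) l (𝓝 (δ ^ ((0:ℝ) - 1))) :=
      ((Real.continuousAt_const_rpow hδ.ne').tendsto.comp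
        (((continuous_sub_right (1:ℝ)).tendsto 0).comp hsnd₀))
    exact hnum.div_atTop (hfst.pos_mul_atTop ha₀ (tendsto_beta_atTop ha₀))
  have hIic : Tendsto (fun p : ℝ × ℝ => betaMeasure p.1 p.2 (Iic (1 - δ))) l (𝓝 0) := by
    refine tendsto_of_tendsto_of_tendsto_of_le_of_le' tendsto_const_nhds
      (by simpa using ENNReal.tendsto_ofReal hbound) (Eventually.of_forall fun _ => zero_le) ?_
    filter_upwards [hparams] with p hp using betaMeasure_Iic_le hp.1 hp.2.1 hp.2.2 hδ
  have hsub := ENNReal.Tendsto.sub tendsto_const_nhds hIic (Or.inl ENNReal.one_ne_top)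
  rw [tsub_zero] at hsub
  refine hsub.congr' ?_
  filter_upwards [hparams] with p hp
  exact (betaMeasure_Ioc_one hp.1 hp.2.1 (by linarith)).symm

theorem tendsto_smallParamFilter :
    Tendsto (fun p : ℝ × ℝ => (1 - p.1, p.2 + p.1)) smallParamFilter (𝓝 1 ×ˢ 𝓝[>] 0) := by
  have hdomain : ∀ᶠ p : ℝ × ℝ in smallParamFilter, p.1 ∈ Ioo (0:ℝ) 1 ∧ 0 < p.1 + p.2 :=
    mem_inf_of_right (mem_principal_self _)
  have haParam : Tendsto (fun p : ℝ × ℝ => aParam p.1 p.2) smallParamFilter (𝓝 0) :=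
    (tendsto_comap.mono_left inf_le_left).mono_right nhdsWithin_le_nhds
  have hα : Tendsto (fun p : ℝ × ℝ => p.1) smallParamFilter (𝓝 0) :=
    squeeze_zero' (hdomain.mono fun p hp => hp.1.1.le)
      (Eventually.of_forall fun p => le_max_left _ _) haParam
  have hθ : Tendsto (fun p : ℝ × ℝ => p.2) smallParamFilter (𝓝 0) :=
    squeeze_zero_norm' (Eventually.of_forall fun p => le_max_right p.1 |p.2|) haParam
  have hfst : Tendsto (fun p : ℝ × ℝ => 1 - p.1) smallParamFilter (𝓝 1) := by
    simpa only [sub_zero] using hα.const_sub 1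
  have hsnd : Tendsto (fun p : ℝ × ℝ => p.2 + p.1) smallParamFilter (𝓝[>] 0) := by
    refine tendsto_nhdsWithin_iff.2 ⟨by simpa only [add_zero] using hθ.add hα, ?_⟩
    filter_upwards [hdomain] with p hp
    exact (add_comm p.1 p.2) ▸ hp.2
  exact hfst.prodMk hsnd

/-- For fixed `δ ∈ (0,1)`, the `Beta(1-α, θ+α)` measure of `(1-δ, 1]` converges to `1` as
`a(α,θ) → 0` over pairs `(α,θ)` with `α ∈ (0,1)` and `θ + α > 0`; in particular,
`Beta(1-α, θ+α)` converges weakly to the point mass at `1`. -/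
theorem beta_measure_Ioc_tendsto_one (δ : ℝ) (hδ : δ ∈ Set.Ioo (0:ℝ) 1) :
    Filter.Tendsto
      (fun p : ℝ × ℝ => betaMeasure (1 - p.1) (p.2 + p.1) (Set.Ioc (1 - δ) 1))
      smallParamFilter (nhds 1) := by
  have hcomp := (tendsto_betaMeasure_Ioc_one one_pos hδ.1).comp tendsto_smallParamFilter
  exact hcomp
end

section
/- Fix α ∈ (0,1), let a be a scaling function, and let x ≥ 0. Then lim_{θ→∞} (a(θ)/θ) · log F_θ((θ/a(θ))x + β(α,θ)) = 0. -/
open MeasureTheory Filter Set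

/-- `c_α = α / Γ(1-α)`. -/
noncomputable def cAlpha (α : ℝ) : ℝ := α / Real.Gamma (1 - α)

/-- `β(α,θ) = log θ - (α+1) log log θ - log Γ(1-α)`. -/
noncomputable def betaShift (α θ : ℝ) : ℝ :=
  Real.log θ - (α + 1) * Real.log (Real.log θ) - Real.log (Real.Gamma (1 - α))

/-- The distribution function of the largest jump `V₁(T)`:
`F_θ(s) = (1 + c_α s^{-α} ∫_1^∞ z^{-(1+α)} e^{-sz} dz)^{-θ/α}` for `s > 0`, and `0` for `s ≤ 0`. -/
noncomputable def Fdist (α θ s : ℝ) : ℝ :=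
  if 0 < s then
    (1 + cAlpha α * s ^ (-α) *
        ∫ z in Set.Ioi (1:ℝ), z ^ (-(1 + α)) * Real.exp (-(s * z))) ^ (-(θ / α))
  else 0


/-! For `s > 0`, `log F_θ(s) = -(θ/α) log(1 + ε)` with `0 ≤ ε ≤ c_α s^{-(1+α)} e^{-s}`, so
`|log F_θ(s)| ≤ (θ/α) ε`. At `s ≥ β(α,θ)` the identity `e^{-β(α,θ)} = (log θ)^{1+α} Γ(1-α)/θ`
cancels both `c_α` and `θ`, leaving `|log F_θ(s)| ≤ (log θ / s)^{1+α}`, which is at most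
`2^{1+α}` because `β(α,θ) ~ log θ`. For `x ≥ 0` the argument `(θ/a(θ)) x + β(α,θ)` is `≥ β(α,θ)`,
so the quantity in the theorem is `O(a(θ)/θ)`. -/

/-- The perturbation `c_α s^{-α} ∫_1^∞ z^{-(1+α)} e^{-sz} dz` of `1` inside `F_θ(s)`. -/
noncomputable def jumpTail (α s : ℝ) : ℝ :=
  cAlpha α * s ^ (-α) * ∫ z in Set.Ioi (1:ℝ), z ^ (-(1 + α)) * Real.exp (-(s * z))

lemma Fdist_of_pos {α θ s : ℝ} (hs : 0 < s) :
    Fdist α θ s = (1 + jumpTail α s) ^ (-(θ / α)) := by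
  rw [Fdist, if_pos hs, jumpTail]

lemma cAlpha_pos {α : ℝ} (hα : α ∈ Set.Ioo (0:ℝ) 1) : 0 < cAlpha α :=
  div_pos hα.1 (Real.Gamma_pos_of_pos (by linarith [hα.2]))

lemma cAlpha_mul_Gamma {α : ℝ} (hα : α < 1) : cAlpha α * Real.Gamma (1 - α) = α :=
  div_mul_cancel₀ α (Real.Gamma_pos_of_pos (by linarith)).ne'

lemma setIntegral_Ioi_one_rpow_mul_exp_le {p s : ℝ} (hp : p ≤ 0) (hs : 0 < s) :
    ∫ z in Set.Ioi (1:ℝ), z ^ p * Real.exp (-(s * z)) ≤ Real.exp (-s) / s := by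
  have hrpow : ∀ z ∈ Set.Ioi (1:ℝ), z ^ p ≤ 1 := fun z hz =>
    Real.rpow_le_one_of_one_le_of_nonpos (le_of_lt hz) hp
  have hexp : IntegrableOn (fun z : ℝ => Real.exp (-(s * z))) (Set.Ioi 1) := by
    simpa only [neg_mul] using exp_neg_integrableOn_Ioi 1 hs
  have hmeas : AEStronglyMeasurable (fun z : ℝ => z ^ p * Real.exp (-(s * z)))
      (volume.restrict (Set.Ioi 1)) := by
    refine ContinuousOn.aestronglyMeasurable ?_ measurableSet_Ioi
    exact (continuousOn_id.rpow_const fun z hz => Or.inl (zero_lt_one.trans hz).ne').mul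
      (by fun_prop)
  have hint : IntegrableOn (fun z : ℝ => z ^ p * Real.exp (-(s * z))) (Set.Ioi 1) := by
    refine hexp.mono' hmeas ((ae_restrict_iff' measurableSet_Ioi).mpr (ae_of_all _ fun z hz => ?_))
    have : 0 < z := zero_lt_one.trans hz
    rw [Real.norm_eq_abs, abs_of_nonneg (by positivity)]
    exact mul_le_of_le_one_left (Real.exp_pos _).le (hrpow z hz)
  have hexp_integral : ∫ z in Set.Ioi (1:ℝ), Real.exp (-(s * z)) = Real.exp (-s) / s := by
    have := integral_comp_mul_left_Ioi (fun u : ℝ => Real.exp (-u)) 1 hs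
    simp only [smul_eq_mul, mul_one, integral_exp_neg_Ioi] at this
    rw [this, inv_mul_eq_div]
  rw [← hexp_integral]
  exact setIntegral_mono_on hint hexp measurableSet_Ioi fun z hz =>
    mul_le_of_le_one_left (Real.exp_pos _).le (hrpow z hz)

section jumpTail

variable {α s : ℝ} (hα : α ∈ Set.Ioo (0:ℝ) 1) (hs : 0 < s)
include hα hs

lemma jumpTail_nonneg : 0 ≤ jumpTail α s := by
  have := cAlpha_pos hα
  refine mul_nonneg (by positivity) (setIntegral_nonneg measurableSet_Ioi fun z hz => ?_)
  have : (0:ℝ) < z := zero_lt_one.trans hz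
  positivity

lemma jumpTail_le : jumpTail α s ≤ cAlpha α * s ^ (-(1 + α)) * Real.exp (-s) := by
  have hc := cAlpha_pos hα
  calc jumpTail α s ≤ cAlpha α * s ^ (-α) * (Real.exp (-s) / s) :=
        mul_le_mul_of_nonneg_left
          (setIntegral_Ioi_one_rpow_mul_exp_le (by linarith [hα.1]) hs) (by positivity)
    _ = cAlpha α * s ^ (-(1 + α)) * Real.exp (-s) := by
        rw [neg_add, Real.rpow_add hs, Real.rpow_neg_one]
        ring

lemma abs_log_Fdist_le {θ : ℝ} (hθ : 0 ≤ θ) :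
    |Real.log (Fdist α θ s)| ≤ θ / α * jumpTail α s := by
  have hε := jumpTail_nonneg hα hs
  have hα0 := hα.1
  rw [Fdist_of_pos hs, Real.log_rpow (by linarith), abs_mul, abs_neg,
    abs_of_nonneg (div_nonneg hθ hα0.le), abs_of_nonneg (Real.log_nonneg (by linarith))]
  gcongr
  linarith [Real.log_le_sub_one_of_pos (by linarith : 0 < 1 + jumpTail α s)]

end jumpTail

lemma exp_neg_betaShift {α θ : ℝ} (hα : α < 1) (hθ : 1 < θ) :
    Real.exp (-betaShift α θ) = Real.log θ ^ (α + 1) * Real.Gamma (1 - α) / θ := by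
  have hθ0 : 0 < θ := by linarith
  rw [betaShift, show ∀ u v w : ℝ, -(u - v - w) = -u + v + w by intros; ring,
    Real.exp_add, Real.exp_add, Real.exp_neg, Real.exp_log hθ0,
    Real.exp_log (Real.Gamma_pos_of_pos (by linarith)),
    Real.rpow_def_of_pos (Real.log_pos hθ), mul_comm (Real.log _)]
  ring

lemma tendsto_betaShift_div_log (α : ℝ) :
    Tendsto (fun θ => betaShift α θ / Real.log θ) atTop (nhds 1) := by
  have hloglog : Tendsto (fun θ => Real.log (Real.log θ) / Real.log θ) atTop (nhds 0) :=
    (by simpa using Real.isLittleO_log_id_atTop.tendsto_div_nhds_zero :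
      Tendsto (fun y => Real.log y / y) atTop (nhds 0)).comp Real.tendsto_log_atTop
  have hinv : Tendsto (fun θ => (Real.log θ)⁻¹) atTop (nhds 0) :=
    Real.tendsto_log_atTop.inv_tendsto_atTop
  have := (tendsto_const_nhds (x := (1:ℝ))).sub (hloglog.const_mul (α + 1)) |>.sub
    (hinv.const_mul (Real.log (Real.Gamma (1 - α))))
  simp only [mul_zero, sub_zero] at this
  refine this.congr' ((Real.tendsto_log_atTop.eventually_gt_atTop 0).mono fun θ hθ => ?_)
  simp only [betaShift]
  field_simp

lemma abs_log_Fdist_le_of_betaShift_le {α θ s : ℝ} (hα : α ∈ Set.Ioo (0:ℝ) 1) (hθ : 1 < θ)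
    (hlog : Real.log θ ≤ 2 * betaShift α θ) (hs : betaShift α θ ≤ s) :
    |Real.log (Fdist α θ s)| ≤ 2 ^ (1 + α) := by
  have hlogθ := Real.log_pos hθ
  have hs0 : 0 < s := by linarith
  have hratio : (Real.log θ / s) ^ (1 + α) ≤ 2 ^ (1 + α) :=
    Real.rpow_le_rpow (by positivity) ((div_le_iff₀ hs0).mpr (by linarith)) (by linarith [hα.1])
  have hc := cAlpha_pos hα
  have hα0 := hα.1
  calc |Real.log (Fdist α θ s)|
      ≤ θ / α * (cAlpha α * s ^ (-(1 + α)) * Real.exp (-betaShift α θ)) := by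
        refine (abs_log_Fdist_le hα hs0 (by linarith)).trans ?_
        gcongr
        exact (jumpTail_le hα hs0).trans (by gcongr)
    _ = cAlpha α * Real.Gamma (1 - α) / α * (Real.log θ / s) ^ (1 + α) := by
        rw [exp_neg_betaShift hα.2 hθ, Real.div_rpow hlogθ.le hs0.le, Real.rpow_neg hs0.le,
          add_comm α 1]
        field_simp
    _ ≤ 2 ^ (1 + α) := by
        rw [cAlpha_mul_Gamma hα.2, div_self hα0.ne', one_mul]
        exact hratio

theorem mdp_upper_nonneg_general (α : ℝ) (hα : α ∈ Set.Ioo (0:ℝ) 1)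
    (a : ℝ → ℝ) (hapos : ∀ θ > (0:ℝ), 0 < a θ)
    (ha' : Filter.Tendsto (fun θ => a θ / θ) Filter.atTop (nhds 0))
    (x : ℝ) (hx : 0 ≤ x) :
    Filter.Tendsto
      (fun θ : ℝ => a θ / θ * Real.log (Fdist α θ (θ / a θ * x + betaShift α θ)))
      Filter.atTop (nhds 0) := by
  have hlog : ∀ᶠ θ in atTop, Real.log θ ≤ 2 * betaShift α θ := by
    filter_upwards
      [(tendsto_betaShift_div_log α).eventually_const_lt (by norm_num : (1 / 2 : ℝ) < 1),
      Real.tendsto_log_atTop.eventually_gt_atTop 0] with θ hβ hlogθ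
    linarith [(lt_div_iff₀ hlogθ).mp hβ]
  refine squeeze_zero_norm' ?_ (by simpa using ha'.const_mul ((2 : ℝ) ^ (1 + α)))
  filter_upwards [hlog, eventually_gt_atTop 1] with θ hlogθ hθ
  have hθ0 : 0 < θ := by linarith
  have haθ := hapos θ hθ0
  have hscale : 0 ≤ a θ / θ := by positivity
  have hshift : 0 ≤ θ / a θ * x := by positivity
  rw [Real.norm_eq_abs, abs_mul, abs_of_nonneg hscale, mul_comm _ (a θ / θ)]
  exact mul_le_mul_of_nonneg_left
    (abs_log_Fdist_le_of_betaShift_le hα hθ hlogθ (by linarith)) hscale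

/-- For `α ∈ (0,1)`, a scaling function `a` (`a(θ) → ∞`, `a(θ)/θ → 0`) and `x ≥ 0`,
`lim_{θ→∞} (a(θ)/θ) log F_θ((θ/a(θ)) x + β(α,θ)) = 0`. -/
theorem mdp_upper_nonneg (α : ℝ) (hα : α ∈ Set.Ioo (0:ℝ) 1)
    (a : ℝ → ℝ) (hapos : ∀ θ > (0:ℝ), 0 < a θ)
    (ha : Filter.Tendsto a Filter.atTop Filter.atTop)
    (ha' : Filter.Tendsto (fun θ => a θ / θ) Filter.atTop (nhds 0))
    (x : ℝ) (hx : 0 ≤ x) :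
    Filter.Tendsto
      (fun θ : ℝ => a θ / θ * Real.log (Fdist α θ (θ / a θ * x + betaShift α θ)))
      Filter.atTop (nhds 0) :=
  mdp_upper_nonneg_general α hα a hapos ha' x hx
end

section
/- For every α ∈ (0,1) and every integer m ≥ 2, σ²_{α,m} > 0; equivalently, Γ(1−α)Γ(2m−α) + (α − m²)Γ(m−α)² > 0. -/
open Real

/-! With `R m = Γ(1-α) Γ(2m-α) / Γ(m-α)²`, the functional equation of `Γ` gives `R 1 = 1 - α` and
`R (m+1) / R m = (2m+1-α)(2m-α) / (m-α)²`. Hence `R m ≥ m² - α` propagates from `m` to `m + 1`,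
and becomes strict after the first step, because
`(2m+1-α)(2m-α)(m²-α) - ((m+1)²-α)(m-α)² = m² (3m² - 2αm - 1) > 0` for `m ≥ 1 > α`. -/

lemma Real.Gamma_add_two {s : ℝ} (hs : 0 < s) : Gamma (s + 2) = (s + 1) * s * Gamma s := by
  rw [show s + 2 = s + 1 + 1 by ring, Gamma_add_one (by positivity), Gamma_add_one hs.ne', mul_assoc]

lemma succ_sq_sub_mul_sq_lt {x α : ℝ} (hx : 1 ≤ x) (hα : α < 1) :
    ((x + 1) ^ 2 - α) * (x - α) ^ 2 < (2 * x + 1 - α) * (2 * x - α) * (x ^ 2 - α) := by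
  have hdiff : (2 * x + 1 - α) * (2 * x - α) * (x ^ 2 - α) - ((x + 1) ^ 2 - α) * (x - α) ^ 2 =
      x ^ 2 * (3 * x ^ 2 - 2 * α * x - 1) := by ring
  have hpos : 0 < 3 * x ^ 2 - 2 * α * x - 1 := by nlinarith
  nlinarith [mul_pos (by positivity : (0 : ℝ) < x ^ 2) hpos]

lemma sq_sub_mul_Gamma_sq_lt_succ {x α : ℝ} (hx : 1 ≤ x) (hα : α < 1)
    (h : (x ^ 2 - α) * Gamma (x - α) ^ 2 ≤ Gamma (1 - α) * Gamma (2 * x - α)) :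
    ((x + 1) ^ 2 - α) * Gamma (x + 1 - α) ^ 2 < Gamma (1 - α) * Gamma (2 * (x + 1) - α) := by
  have hΓ : 0 < Gamma (x - α) ^ 2 := by
    have := Gamma_pos_of_pos (show 0 < x - α by linarith)
    positivity
  rw [show x + 1 - α = x - α + 1 by ring, Gamma_add_one (by linarith),
    show 2 * (x + 1) - α = 2 * x - α + 2 by ring, Gamma_add_two (by linarith)]
  calc ((x + 1) ^ 2 - α) * ((x - α) * Gamma (x - α)) ^ 2
      = ((x + 1) ^ 2 - α) * (x - α) ^ 2 * Gamma (x - α) ^ 2 := by ring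
    _ < (2 * x + 1 - α) * (2 * x - α) * (x ^ 2 - α) * Gamma (x - α) ^ 2 :=
      mul_lt_mul_of_pos_right (succ_sq_sub_mul_sq_lt hx hα) hΓ
    _ = (2 * x + 1 - α) * (2 * x - α) * ((x ^ 2 - α) * Gamma (x - α) ^ 2) := by ring
    _ ≤ (2 * x + 1 - α) * (2 * x - α) * (Gamma (1 - α) * Gamma (2 * x - α)) :=
      mul_le_mul_of_nonneg_left h (by nlinarith)
    _ = Gamma (1 - α) * ((2 * x - α + 1) * (2 * x - α) * Gamma (2 * x - α)) := by ring

lemma sq_sub_mul_Gamma_sq_le {α : ℝ} (hα : α < 1) {m : ℕ} (hm : 1 ≤ m) :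
    ((m : ℝ) ^ 2 - α) * Gamma (m - α) ^ 2 ≤ Gamma (1 - α) * Gamma (2 * m - α) := by
  induction m, hm using Nat.le_induction with
  | base =>
    have h2 : Gamma (2 - α) = (1 - α) * Gamma (1 - α) := by
      rw [show (2 : ℝ) - α = 1 - α + 1 by ring, Gamma_add_one (by linarith)]
    norm_num [h2]
    nlinarith
  | succ n hn ih =>
    push_cast
    exact (sq_sub_mul_Gamma_sq_lt_succ (by exact_mod_cast hn) hα ih).le

lemma sq_sub_mul_Gamma_sq_lt {α : ℝ} (hα : α < 1) {m : ℕ} (hm : 2 ≤ m) :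
    ((m : ℝ) ^ 2 - α) * Gamma (m - α) ^ 2 < Gamma (1 - α) * Gamma (2 * m - α) := by
  obtain ⟨n, hn, rfl⟩ : ∃ n, 1 ≤ n ∧ m = n + 1 := ⟨m - 1, by omega, by omega⟩
  push_cast
  exact sq_sub_mul_Gamma_sq_lt_succ (by exact_mod_cast hn) hα (sq_sub_mul_Gamma_sq_le hα hn)

/-- For every `α ∈ (0,1)` and integer `m ≥ 2`, the asymptotic variance
`σ²_{α,m} = Γ(2m-α)Γ(1-α)/Γ(m-α)² + α - m²` is positive; equivalently,
`Γ(1-α)Γ(2m-α) + (α-m²)Γ(m-α)² > 0`. -/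
theorem sigmaSq_pos (α : ℝ) (hα : α ∈ Set.Ioo (0:ℝ) 1) (m : ℕ) (hm : 2 ≤ m) :
    0 < Real.Gamma (2 * m - α) * Real.Gamma (1 - α) / (Real.Gamma (m - α)) ^ 2 + α - m ^ 2 ∧
    0 < Real.Gamma (1 - α) * Real.Gamma (2 * m - α) + (α - m ^ 2) * (Real.Gamma (m - α)) ^ 2 := by
  have key := sq_sub_mul_Gamma_sq_lt hα.2 hm
  have hΓ : 0 < Gamma (m - α) :=
    Gamma_pos_of_pos (by linarith [hα.2, (show (2 : ℝ) ≤ m by exact_mod_cast hm)])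
  have hnum : 0 < Gamma (1 - α) * Gamma (2 * m - α) + (α - m ^ 2) * Gamma (m - α) ^ 2 := by
    linear_combination key
  refine ⟨?_, hnum⟩
  have hσ : Gamma (2 * m - α) * Gamma (1 - α) / Gamma (m - α) ^ 2 + α - m ^ 2 =
      (Gamma (1 - α) * Gamma (2 * m - α) + (α - m ^ 2) * Gamma (m - α) ^ 2) / Gamma (m - α) ^ 2 := by
    field_simp [hΓ.ne']
    ring
  rw [hσ]
  positivity
end

section
/- Fix α ∈ (0,1) and an integer m ≥ 2, and set g(x) = s x + t x^m for real s, t. Then (c_α/(2α)) · ( c_α (∫_0^∞ g(x) x^{−(1+α)} e^{−x} dx)² + ∫_0^∞ g(x)² x^{−(1+α)} e^{−x} dx ) = Λ(s,t) for all s, t ∈ ℝ. -/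
open MeasureTheory Real Set

/-- The limiting cumulant generating function
`Λ(s,t) = ½(s² + (2Γ(m-α)Γ(m+1)/(Γ(m)Γ(1-α))) st + (Γ(2m-α)/Γ(1-α) + α(Γ(m-α)/Γ(1-α))²) t²)`. -/
noncomputable def Lam (α : ℝ) (m : ℕ) (s t : ℝ) : ℝ :=
  (1 / 2) * (s ^ 2 +
    (2 * Real.Gamma (m - α) * Real.Gamma (m + 1) / (Real.Gamma m * Real.Gamma (1 - α))) * s * t +
    (Real.Gamma (2 * m - α) / Real.Gamma (1 - α) +
      α * (Real.Gamma (m - α) / Real.Gamma (1 - α)) ^ 2) * t ^ 2)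

lemma aux_integrable (α : ℝ) (hα0 : 0 < α) (hα1 : α < 1) (k : ℕ) (hk : 1 ≤ k) :
    IntegrableOn (fun x : ℝ => x ^ k * x ^ (-(1 + α)) * Real.exp (-x)) (Ioi 0) ∧
    ∫ x in Ioi (0:ℝ), x ^ k * x ^ (-(1 + α)) * Real.exp (-x) = Real.Gamma (k - α) := by
  have hk1 : (1:ℝ) ≤ (k:ℝ) := by exact_mod_cast hk
  have h : 0 < (k:ℝ) - α := by linarith
  have hcong : Set.EqOn (fun x : ℝ => Real.exp (-x) * x ^ ((k:ℝ) - α - 1))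
      (fun x : ℝ => x ^ k * x ^ (-(1 + α)) * Real.exp (-x)) (Ioi 0) := by
    intro x hx
    have hx0 : 0 < x := hx
    have : x ^ (k:ℕ) * x ^ (-(1 + α)) = x ^ ((k:ℝ) - α - 1) := by
      rw [← Real.rpow_natCast x k, ← Real.rpow_add hx0]
      ring_nf
    simp only [this]
    ring
  constructor
  · exact (Real.GammaIntegral_convergent h).congr_fun hcong measurableSet_Ioi
  · rw [Real.Gamma_eq_integral h]
    exact setIntegral_congr_fun measurableSet_Ioi hcong.symm

/-- For `α ∈ (0,1)`, integer `m ≥ 2` and `g(x) = sx + tx^m`, one has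
`(c_α/(2α)) (c_α (∫_0^∞ g(x) x^{-(1+α)} e^{-x} dx)² + ∫_0^∞ g(x)² x^{-(1+α)} e^{-x} dx)
  = Λ(s,t)` for all `s, t ∈ ℝ`. -/
theorem integral_identity_Lam (α : ℝ) (hα : α ∈ Set.Ioo (0:ℝ) 1) (m : ℕ) (hm : 2 ≤ m)
    (s t : ℝ) :
    cAlpha α / (2 * α) *
      (cAlpha α *
          (∫ x in Set.Ioi (0:ℝ), (s * x + t * x ^ m) * x ^ (-(1 + α)) * Real.exp (-x)) ^ 2 +
        ∫ x in Set.Ioi (0:ℝ), (s * x + t * x ^ m) ^ 2 * x ^ (-(1 + α)) * Real.exp (-x)) =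
      Lam α m s t := by
  obtain ⟨hα0, hα1⟩ := hα
  obtain ⟨i1, v1⟩ := aux_integrable α hα0 hα1 1 le_rfl
  obtain ⟨im, vm⟩ := aux_integrable α hα0 hα1 m (by omega)
  obtain ⟨i2, v2⟩ := aux_integrable α hα0 hα1 2 (by omega)
  obtain ⟨im1, vm1⟩ := aux_integrable α hα0 hα1 (m + 1) (by omega)
  obtain ⟨i2m, v2m⟩ := aux_integrable α hα0 hα1 (2 * m) (by omega)
  have I1 : (∫ x in Set.Ioi (0:ℝ), (s * x + t * x ^ m) * x ^ (-(1 + α)) * Real.exp (-x))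
      = s * Real.Gamma (1 - α) + t * Real.Gamma ((m:ℝ) - α) := by
    calc (∫ x in Set.Ioi (0:ℝ), (s * x + t * x ^ m) * x ^ (-(1 + α)) * Real.exp (-x))
        = ∫ x in Set.Ioi (0:ℝ), (s * (x ^ (1:ℕ) * x ^ (-(1 + α)) * Real.exp (-x))
            + t * (x ^ m * x ^ (-(1 + α)) * Real.exp (-x))) := by
          congr 1; funext x; ring
      _ = s * (∫ x in Set.Ioi (0:ℝ), x ^ (1:ℕ) * x ^ (-(1 + α)) * Real.exp (-x))
            + t * (∫ x in Set.Ioi (0:ℝ), x ^ m * x ^ (-(1 + α)) * Real.exp (-x)) := by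
          rw [← integral_const_mul, ← integral_const_mul,
            ← integral_add (i1.const_mul s) (im.const_mul t)]
      _ = s * Real.Gamma (1 - α) + t * Real.Gamma ((m:ℝ) - α) := by
          rw [v1, vm]; norm_num
  have I2 : (∫ x in Set.Ioi (0:ℝ), (s * x + t * x ^ m) ^ 2 * x ^ (-(1 + α)) * Real.exp (-x))
      = s ^ 2 * Real.Gamma (2 - α) + 2 * s * t * Real.Gamma ((m:ℝ) + 1 - α)
        + t ^ 2 * Real.Gamma (2 * (m:ℝ) - α) := by
    calc (∫ x in Set.Ioi (0:ℝ), (s * x + t * x ^ m) ^ 2 * x ^ (-(1 + α)) * Real.exp (-x))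
        = ∫ x in Set.Ioi (0:ℝ), (s ^ 2 * (x ^ (2:ℕ) * x ^ (-(1 + α)) * Real.exp (-x))
            + (2 * s * t) * (x ^ (m + 1) * x ^ (-(1 + α)) * Real.exp (-x))
            + t ^ 2 * (x ^ (2 * m) * x ^ (-(1 + α)) * Real.exp (-x))) := by
          congr 1; funext x; ring
      _ = s ^ 2 * (∫ x in Set.Ioi (0:ℝ), x ^ (2:ℕ) * x ^ (-(1 + α)) * Real.exp (-x))
            + (2 * s * t) * (∫ x in Set.Ioi (0:ℝ), x ^ (m + 1) * x ^ (-(1 + α)) * Real.exp (-x))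
            + t ^ 2 * (∫ x in Set.Ioi (0:ℝ), x ^ (2 * m) * x ^ (-(1 + α)) * Real.exp (-x)) := by
          rw [← integral_const_mul, ← integral_const_mul, ← integral_const_mul,
            ← integral_add (i2.const_mul _) (im1.const_mul _)]
          exact integral_add ((i2.const_mul _).add (im1.const_mul _)) (i2m.const_mul _)
      _ = _ := by rw [v2, vm1, v2m]; push_cast; norm_num
  rw [I1, I2, Lam, cAlpha]
  have hm1 : (1:ℝ) < (m:ℝ) := by exact_mod_cast (by omega : 1 < m)
  have hG2 : Real.Gamma (2 - α) = (1 - α) * Real.Gamma (1 - α) := by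
    rw [show (2:ℝ) - α = (1 - α) + 1 by ring, Real.Gamma_add_one (by linarith)]
  have hGm1 : Real.Gamma ((m:ℝ) + 1 - α) = ((m:ℝ) - α) * Real.Gamma ((m:ℝ) - α) := by
    rw [show (m:ℝ) + 1 - α = ((m:ℝ) - α) + 1 by ring, Real.Gamma_add_one (by nlinarith)]
  have hGm : Real.Gamma ((m:ℝ) + 1) = (m:ℝ) * Real.Gamma (m:ℝ) := by
    rw [Real.Gamma_add_one (by positivity)]
  have hne1 : Real.Gamma (1 - α) ≠ 0 := (Real.Gamma_pos_of_pos (by linarith)).ne'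
  have hnem : Real.Gamma (m:ℝ) ≠ 0 := (Real.Gamma_pos_of_pos (by linarith)).ne'
  rw [hG2, hGm1, hGm]
  field_simp
  ring
end

section
/- Fix α ∈ (0,1). Let a, r : (0,∞) → (0,∞) satisfy a(θ) → ∞, a(θ)/√θ → 0, (log θ)/r(θ) → 0, and a(θ)² r(θ)/θ → ∞ as θ → ∞. Then (a(θ)²/θ) · log( 1 − (1 + c_α r(θ)^{−α} ∫_1^∞ z^{−(1+α)} e^{−r(θ) z} dz)^{−θ/α} ) → −∞ as θ → ∞. -/
/-! Write `s = c_α r^{-α} ∫_1^∞ z^{-(1+α)} e^{-rz} dz`. The integral is at most `e^{-r}`, and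
`1 - (1 + s)^{-θ/α} ≤ (θ/α) log (1 + s) ≤ θ s / α`, so the logarithm is at most
`log θ + log (c_α/α) - r`, which is `≤ -r/2` once `log θ = o(r)`. Multiplying by `a²/θ` gives
at most `-a² r / (2θ) → -∞`. -/

open MeasureTheory Filter Set

section TruncatedIntegral

variable {p r : ℝ}

theorem integrableOn_rpow_mul_exp_neg_mul_Ioi_one (hp : p ≤ 0) (hr : 0 < r) :
    IntegrableOn (fun z : ℝ => z ^ p * Real.exp (-(r * z))) (Ioi 1) := by
  refine Integrable.mono' (integrableOn_exp_mul_Ioi (neg_neg_of_pos hr) 1) ?_ ?_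
  · exact ((continuousOn_id.rpow_const fun z hz => Or.inl (zero_lt_one.trans hz).ne').mul
      (by fun_prop)).aestronglyMeasurable measurableSet_Ioi
  · refine ae_restrict_of_forall_mem measurableSet_Ioi fun z (hz : 1 < z) => ?_
    rw [Real.norm_eq_abs, abs_of_nonneg (by positivity), neg_mul]
    exact mul_le_of_le_one_left (Real.exp_pos _).le (Real.rpow_le_one_of_one_le_of_nonpos hz.le hp)

theorem setIntegral_rpow_mul_exp_neg_mul_Ioi_one_pos (hp : p ≤ 0) (hr : 0 < r) :
    0 < ∫ z in Ioi (1 : ℝ), z ^ p * Real.exp (-(r * z)) := by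
  have hpos : ∀ z ∈ Ioi (1 : ℝ), 0 < z ^ p * Real.exp (-(r * z)) := fun z (hz : 1 < z) =>
    mul_pos (Real.rpow_pos_of_pos (zero_lt_one.trans hz) p) (Real.exp_pos _)
  rw [setIntegral_pos_iff_support_of_nonneg_ae
      (ae_restrict_of_forall_mem measurableSet_Ioi fun z hz => (hpos z hz).le)
      (integrableOn_rpow_mul_exp_neg_mul_Ioi_one hp hr),
    inter_eq_right.2 fun z hz => Function.mem_support.2 (hpos z hz).ne']
  simp

theorem setIntegral_rpow_mul_exp_neg_mul_Ioi_one_le (hp : p ≤ 0) (hr : 0 < r) :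
    ∫ z in Ioi (1 : ℝ), z ^ p * Real.exp (-(r * z)) ≤ Real.exp (-r) / r := by
  have hexp : ∫ z in Ioi (1 : ℝ), Real.exp (-r * z) = Real.exp (-r) / r := by
    rw [integral_exp_mul_Ioi (neg_neg_of_pos hr)]
    simp [neg_div_neg_eq]
  rw [← hexp]
  refine setIntegral_mono_on (integrableOn_rpow_mul_exp_neg_mul_Ioi_one hp hr)
    (integrableOn_exp_mul_Ioi (neg_neg_of_pos hr) 1) measurableSet_Ioi fun z (hz : 1 < z) => ?_
  rw [neg_mul]
  exact mul_le_of_le_one_left (Real.exp_pos _).le (Real.rpow_le_one_of_one_le_of_nonpos hz.le hp)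

end TruncatedIntegral

theorem log_one_sub_one_add_rpow_neg_le {s t : ℝ} (hs : 0 < s) (ht : 0 < t) :
    Real.log (1 - (1 + s) ^ (-t)) ≤ Real.log (t * s) := by
  have hlog : 0 < Real.log (1 + s) := Real.log_pos (by linarith)
  have hrpow : (1 + s) ^ (-t) = Real.exp (-(t * Real.log (1 + s))) := by
    rw [Real.rpow_def_of_pos (by linarith), mul_comm, neg_mul]
  refine Real.log_le_log ?_ ?_
  · rw [hrpow, sub_pos, Real.exp_lt_one_iff, neg_lt_zero]
    positivity
  · calc 1 - (1 + s) ^ (-t) ≤ t * Real.log (1 + s) := by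
          linarith [hrpow, Real.add_one_le_exp (-(t * Real.log (1 + s)))]
      _ ≤ t * s := by
          gcongr
          linarith [Real.log_le_sub_one_of_pos (show 0 < 1 + s by linarith)]

theorem eventually_one_le_and_log_add_le_half {r : ℝ → ℝ} (K : ℝ)
    (hr : Tendsto (fun θ => Real.log θ / r θ) atTop (nhds 0)) (hpos : ∀ᶠ θ in atTop, 0 < r θ) :
    ∀ᶠ θ in atTop, 1 ≤ r θ ∧ Real.log θ + K ≤ r θ / 2 := by
  filter_upwards [hr.eventually (gt_mem_nhds (show (0 : ℝ) < 1 / 4 by norm_num)), hpos,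
    Real.tendsto_log_atTop.eventually_ge_atTop (|K| + 1)] with θ hsmall hrθ hlog
  rw [div_lt_iff₀ hrθ] at hsmall
  constructor <;> linarith [le_abs_self K, abs_nonneg K]

theorem log_one_sub_truncation_le {α θ r : ℝ} (hα : α ∈ Ioo (0 : ℝ) 1) (hθ : 0 < θ)
    (hr : 1 ≤ r) :
    Real.log (1 - (1 + cAlpha α * r ^ (-α) *
        ∫ z in Ioi (1 : ℝ), z ^ (-(1 + α)) * Real.exp (-(r * z))) ^ (-(θ / α)))
      ≤ Real.log θ + Real.log (cAlpha α / α) - r := by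
  obtain ⟨hα0, hα1⟩ := hα
  have hp : -(1 + α) ≤ 0 := by linarith
  have hc : 0 < cAlpha α := div_pos hα0 (Real.Gamma_pos_of_pos (by linarith))
  set I := ∫ z in Ioi (1 : ℝ), z ^ (-(1 + α)) * Real.exp (-(r * z))
  have hI : 0 < I := setIntegral_rpow_mul_exp_neg_mul_Ioi_one_pos hp (by linarith)
  have hI_le : I ≤ Real.exp (-r) :=
    (setIntegral_rpow_mul_exp_neg_mul_Ioi_one_le hp (by linarith)).trans
      (div_le_self (Real.exp_pos _).le hr)
  calc _ ≤ Real.log (θ / α * (cAlpha α * r ^ (-α) * I)) :=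
        log_one_sub_one_add_rpow_neg_le (by positivity) (by positivity)
    _ ≤ Real.log (θ / α * (cAlpha α * 1 * Real.exp (-r))) := by
        gcongr
        exact Real.rpow_le_one_of_one_le_of_nonpos hr (by linarith)
    _ = Real.log θ + Real.log (cAlpha α / α) - r := by
        rw [mul_one, ← mul_assoc, div_mul_eq_mul_div, mul_div_assoc,
          Real.log_mul (by positivity) (Real.exp_pos _).ne', Real.log_mul hθ.ne' (by positivity),
          Real.log_exp, sub_eq_add_neg]

theorem truncation_exponential_negligible_general (α : ℝ) (hα : α ∈ Set.Ioo (0:ℝ) 1)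
    (a r : ℝ → ℝ)
    (hr : Filter.Tendsto (fun θ => Real.log θ / r θ) Filter.atTop (nhds 0))
    (har : Filter.Tendsto (fun θ => a θ ^ 2 * r θ / θ) Filter.atTop Filter.atTop) :
    Filter.Tendsto
      (fun θ : ℝ => a θ ^ 2 / θ *
        Real.log (1 - (1 + cAlpha α * r θ ^ (-α) *
          ∫ z in Set.Ioi (1:ℝ), z ^ (-(1 + α)) * Real.exp (-(r θ * z))) ^ (-(θ / α))))
      Filter.atTop Filter.atBot := by
  have hr_pos : ∀ᶠ θ in atTop, 0 < r θ := by
    filter_upwards [har.eventually_gt_atTop 0, eventually_gt_atTop 0] with θ h hθ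
    exact pos_of_mul_pos_right ((div_pos_iff_of_pos_right hθ).1 h) (sq_nonneg _)
  refine tendsto_atBot_mono' atTop ?_
    (tendsto_neg_atTop_atBot.comp (har.atTop_div_const two_pos))
  filter_upwards [eventually_gt_atTop 0,
    eventually_one_le_and_log_add_le_half (Real.log (cAlpha α / α)) hr hr_pos]
    with θ hθ ⟨hr1, hlog⟩
  calc _ ≤ a θ ^ 2 / θ * (Real.log θ + Real.log (cAlpha α / α) - r θ) := by
        gcongr
        exact log_one_sub_truncation_le hα hθ hr1
    _ ≤ a θ ^ 2 / θ * (-r θ / 2) := by gcongr; linarith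
    _ = -(a θ ^ 2 * r θ / θ / 2) := by ring

/-- For `α ∈ (0,1)` and functions `a, r : (0,∞) → (0,∞)` with `a(θ) → ∞`, `a(θ)/√θ → 0`,
`log θ / r(θ) → 0` and `a(θ)² r(θ)/θ → ∞`, one has
`(a(θ)²/θ) log(1 - (1 + c_α r(θ)^{-α} ∫_1^∞ z^{-(1+α)} e^{-r(θ)z} dz)^{-θ/α}) → -∞`. -/
theorem truncation_exponential_negligible (α : ℝ) (hα : α ∈ Set.Ioo (0:ℝ) 1)
    (a r : ℝ → ℝ) (hapos : ∀ θ > (0:ℝ), 0 < a θ) (hrpos : ∀ θ > (0:ℝ), 0 < r θ)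
    (ha : Filter.Tendsto a Filter.atTop Filter.atTop)
    (ha' : Filter.Tendsto (fun θ => a θ / Real.sqrt θ) Filter.atTop (nhds 0))
    (hr : Filter.Tendsto (fun θ => Real.log θ / r θ) Filter.atTop (nhds 0))
    (har : Filter.Tendsto (fun θ => a θ ^ 2 * r θ / θ) Filter.atTop Filter.atTop) :
    Filter.Tendsto
      (fun θ : ℝ => a θ ^ 2 / θ *
        Real.log (1 - (1 + cAlpha α * r θ ^ (-α) *
          ∫ z in Set.Ioi (1:ℝ), z ^ (-(1 + α)) * Real.exp (-(r θ * z))) ^ (-(θ / α))))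
      Filter.atTop Filter.atBot :=
  truncation_exponential_negligible_general α hα a r hr har
end

section
/- For p ∈ [0,1] define S_1(p) ∈ [0,∞] by S_1(1) = 0, S_1(p) = k if p ∈ [1/(k+1), 1/k) for some integer k ≥ 1, and S_1(0) = ∞. For each integer n ≥ 1 define I_n(p) by I_n(1) = 0, I_n(p) = k if p ∈ [1/(k+1), 1/k) for some integer 1 ≤ k ≤ n−1, and I_n(p) = n otherwise. Then for every p ∈ [0,1], S_1(p) = sup_{δ>0} liminf_{n→∞} inf { I_n(q) : q ∈ [0,1], |q−p| < δ }. -/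
/-!
On `[0, 1/m)` every `I n` with `n ≥ m` is at least `m`: a point there lies either in a block
`[1/(j+1), 1/j)` with `j ≥ m`, where `I n` equals `j`, or in none of the first `n - 1` blocks,
where `I n` equals `n`. So if the `δ`-ball around `p` stays inside `[0, 1/m)`, the liminf of the
local infima is at least `m`. For `p ∈ [1/(k+1), 1/k)` take `m = k` and `δ = 1/k - p`; conversely
`I n p = k` once `n > k` bounds every local infimum by `k`. At `p = 0` every `m` is attained this
way, and at `p = 1` the value `I n 1 = 0` makes every local infimum vanish.
-/

open Filter Set
open scoped ENNReal

lemma exists_one_div_succ_le_lt_one_div {q : ℝ} (hq₀ : 0 < q) (hq₁ : q < 1) :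
    ∃ k : ℕ, 1 ≤ k ∧ 1 / ((k : ℝ) + 1) ≤ q ∧ q < 1 / (k : ℝ) := by
  have h_ceil_gt : 1 < ⌈1 / q⌉₊ := Nat.lt_ceil.2 (by
    rw [Nat.cast_one, lt_one_div one_pos hq₀, div_one]; exact hq₁)
  obtain ⟨k, hk⟩ := Nat.exists_eq_add_one_of_ne_zero (by omega : ⌈1 / q⌉₊ ≠ 0)
  have hk₁ : 1 ≤ k := by omega
  have hk_pos : (0 : ℝ) < k := by exact_mod_cast hk₁
  have h_ceil : ((⌈1 / q⌉₊ : ℕ) : ℝ) = k + 1 := by rw [hk]; push_cast; ring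
  refine ⟨k, hk₁, (one_div_le (by positivity) hq₀).2 ?_, (lt_one_div hq₀ hk_pos).2 ?_⟩
  · exact h_ceil ▸ Nat.le_ceil _
  · linarith [h_ceil ▸ Nat.ceil_lt_add_one (one_div_pos.2 hq₀).le]

noncomputable def localInf (I : ℕ → ℝ → ℝ≥0∞) (n : ℕ) (p δ : ℝ) : ℝ≥0∞ :=
  sInf {v : ℝ≥0∞ | ∃ q ∈ Icc (0 : ℝ) 1, |q - p| < δ ∧ v = I n q}

section ApproximateRate

variable {I : ℕ → ℝ → ℝ≥0∞}

lemma localInf_le {n : ℕ} {p δ q : ℝ} (hq : q ∈ Icc (0 : ℝ) 1) (hqδ : |q - p| < δ) :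
    localInf I n p δ ≤ I n q :=
  sInf_le ⟨q, hq, hqδ, rfl⟩

lemma le_localInf {n : ℕ} {p δ : ℝ} {c : ℝ≥0∞}
    (h : ∀ q ∈ Icc (0 : ℝ) 1, |q - p| < δ → c ≤ I n q) : c ≤ localInf I n p δ :=
  le_sInf fun _ ⟨q, hq, hqδ, hv⟩ ↦ hv ▸ h q hq hqδ

lemma natCast_le_of_lt_one_div
    (hI_mid : ∀ n : ℕ, 1 ≤ n → ∀ k : ℕ, 1 ≤ k → k ≤ n - 1 → ∀ p : ℝ,
      1 / ((k : ℝ) + 1) ≤ p → p < 1 / (k : ℝ) → I n p = (k : ℝ≥0∞))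
    (hI_else : ∀ n : ℕ, 1 ≤ n → ∀ p : ℝ, p ≠ 1 →
      (¬ ∃ k : ℕ, 1 ≤ k ∧ k ≤ n - 1 ∧ 1 / ((k : ℝ) + 1) ≤ p ∧ p < 1 / (k : ℝ)) →
      I n p = (n : ℝ≥0∞))
    {n m : ℕ} (hm : 1 ≤ m) (hmn : m ≤ n) {q : ℝ} (hq : q < 1 / (m : ℝ)) :
    (m : ℝ≥0∞) ≤ I n q := by
  have hm_pos : (0 : ℝ) < m := by exact_mod_cast hm
  by_cases h_block : ∃ k : ℕ, 1 ≤ k ∧ k ≤ n - 1 ∧ 1 / ((k : ℝ) + 1) ≤ q ∧ q < 1 / (k : ℝ)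
  · obtain ⟨k, hk₁, hkn, hk_le, hk_lt⟩ := h_block
    rw [hI_mid n (hm.trans hmn) k hk₁ hkn q hk_le hk_lt]
    have h_lt : (m : ℝ) < k + 1 :=
      (one_div_lt_one_div (by positivity) hm_pos).1 (hk_le.trans_lt hq)
    exact_mod_cast Nat.lt_succ_iff.1 (by exact_mod_cast h_lt)
  · have hq_ne : q ≠ 1 :=
      (hq.trans_le ((div_le_one hm_pos).2 (by exact_mod_cast hm))).ne
    rw [hI_else n (hm.trans hmn) q hq_ne h_block]
    exact_mod_cast hmn

lemma liminf_localInf_le {p δ : ℝ} (hp : p ∈ Icc (0 : ℝ) 1) (hδ : 0 < δ) {c : ℝ≥0∞}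
    (h : ∀ᶠ n in atTop, I n p ≤ c) : liminf (fun n ↦ localInf I n p δ) atTop ≤ c :=
  liminf_le_of_frequently_le' <| Eventually.frequently <| h.mono fun _ hn ↦
    (localInf_le hp (by simpa using hδ)).trans hn

lemma natCast_le_liminf_localInf
    (hI_mid : ∀ n : ℕ, 1 ≤ n → ∀ k : ℕ, 1 ≤ k → k ≤ n - 1 → ∀ p : ℝ,
      1 / ((k : ℝ) + 1) ≤ p → p < 1 / (k : ℝ) → I n p = (k : ℝ≥0∞))
    (hI_else : ∀ n : ℕ, 1 ≤ n → ∀ p : ℝ, p ≠ 1 →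
      (¬ ∃ k : ℕ, 1 ≤ k ∧ k ≤ n - 1 ∧ 1 / ((k : ℝ) + 1) ≤ p ∧ p < 1 / (k : ℝ)) →
      I n p = (n : ℝ≥0∞))
    {m : ℕ} (hm : 1 ≤ m) {p δ : ℝ}
    (h_ball : ∀ q ∈ Icc (0 : ℝ) 1, |q - p| < δ → q < 1 / (m : ℝ)) :
    (m : ℝ≥0∞) ≤ liminf (fun n ↦ localInf I n p δ) atTop :=
  le_liminf_of_le (h := (eventually_ge_atTop m).mono fun _ hmn ↦ le_localInf fun q hq hqδ ↦
    natCast_le_of_lt_one_div hI_mid hI_else hm hmn (h_ball q hq hqδ))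

end ApproximateRate

/-- Let `S₁ : [0,1] → [0,∞]` satisfy `S₁(1) = 0`, `S₁(p) = k` for `p ∈ [1/(k+1), 1/k)` (`k ≥ 1`),
and `S₁(0) = ∞`; for each `n ≥ 1` let `Iₙ` satisfy `Iₙ(1) = 0`, `Iₙ(p) = k` for
`p ∈ [1/(k+1), 1/k)` with `1 ≤ k ≤ n-1`, and `Iₙ(p) = n` otherwise.  Then for every
`p ∈ [0,1]`, `S₁(p) = sup_{δ>0} liminf_{n→∞} inf { Iₙ(q) : q ∈ [0,1], |q - p| < δ }`. -/
theorem rate_function_approximation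
    (S₁ : ℝ → ℝ≥0∞)
    (hS₁_one : S₁ 1 = 0)
    (hS₁_mid : ∀ k : ℕ, 1 ≤ k → ∀ p : ℝ,
      1 / ((k : ℝ) + 1) ≤ p → p < 1 / (k : ℝ) → S₁ p = (k : ℝ≥0∞))
    (hS₁_zero : S₁ 0 = ⊤)
    (I : ℕ → ℝ → ℝ≥0∞)
    (hI_one : ∀ n : ℕ, 1 ≤ n → I n 1 = 0)
    (hI_mid : ∀ n : ℕ, 1 ≤ n → ∀ k : ℕ, 1 ≤ k → k ≤ n - 1 → ∀ p : ℝ,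
      1 / ((k : ℝ) + 1) ≤ p → p < 1 / (k : ℝ) → I n p = (k : ℝ≥0∞))
    (hI_else : ∀ n : ℕ, 1 ≤ n → ∀ p : ℝ, p ≠ 1 →
      (¬ ∃ k : ℕ, 1 ≤ k ∧ k ≤ n - 1 ∧ 1 / ((k : ℝ) + 1) ≤ p ∧ p < 1 / (k : ℝ)) →
      I n p = (n : ℝ≥0∞)) :
    ∀ p ∈ Set.Icc (0:ℝ) 1,
      S₁ p = ⨆ (δ : ℝ) (_ : 0 < δ),
        Filter.liminf
          (fun n : ℕ =>
            sInf {v : ℝ≥0∞ | ∃ q ∈ Set.Icc (0:ℝ) 1, |q - p| < δ ∧ v = I n q})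
          Filter.atTop := by
  intro p hp
  change S₁ p = ⨆ (δ : ℝ) (_ : 0 < δ), liminf (fun n ↦ localInf I n p δ) atTop
  rcases hp.1.eq_or_lt with rfl | hp₀
  · rw [hS₁_zero, eq_comm, eq_top_iff, ← ENNReal.iSup_natCast]
    refine iSup_le fun m ↦ ?_
    rcases Nat.eq_zero_or_pos m with rfl | hm
    · simp
    refine le_iSup₂_of_le (1 / (m : ℝ)) (by positivity) <|
      natCast_le_liminf_localInf hI_mid hI_else hm fun q hq hqδ ↦ ?_
    rwa [sub_zero, abs_of_nonneg hq.1] at hqδ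
  rcases hp.2.eq_or_lt with rfl | hp₁
  · refine hS₁_one.trans (le_antisymm zero_le (iSup₂_le fun δ hδ ↦ ?_))
    exact liminf_localInf_le hp hδ <| (eventually_ge_atTop 1).mono fun n hn ↦ (hI_one n hn).le
  obtain ⟨k, hk₁, hk_le, hk_lt⟩ := exists_one_div_succ_le_lt_one_div hp₀ hp₁
  rw [hS₁_mid k hk₁ p hk_le hk_lt]
  refine le_antisymm ?_ (iSup₂_le fun δ hδ ↦ liminf_localInf_le hp hδ ?_)
  · refine le_iSup₂_of_le (1 / (k : ℝ) - p) (by linarith) <|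
      natCast_le_liminf_localInf hI_mid hI_else hk₁ fun q _ hqδ ↦ ?_
    linarith [(abs_lt.1 hqδ).2]
  · filter_upwards [eventually_ge_atTop (k + 1)] with n hn
    exact (hI_mid n (by omega) k hk₁ (by omega) p hk_le hk_lt).le
end
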